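/- arXiv:1301.2898 — 4 statements merged into one kernel-verified Lean document; each statement's English description precedes it below -/
import Mathlib

section
/- Let p > 1, f, F > 0 with f^p ≤ F. For β > 0 define Φ(β) = (1 + 1/β) · ((β+1)^{p-1} F − f^p)/(p−1). Then Φ is minimized over β > 0 at β = ω_p(f^p/F) − 1 (when f^p < F), and the minimum value equals F·ω_p(f^p/F)^p. -/
/-- For `p > 1`, `0 < f^p < F`, and `c = ω_p(f^p/F)` (i.e. `c ∈ [1, p/(p-1)]` with
`H_p c = f^p/F`), the function `Φ(β) = (1 + 1/β)·((β+1)^(p-1)F − f^p)/(p−1)` on `β > 0`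
is minimized at `β = c − 1`, with minimum value `F·c^p`. -/
theorem Phi_minimized_at_omega_sub_one (p f F c : ℝ) (hp : 1 < p) (hf : 0 < f)
    (hfF : f ^ p < F) (hc : c ∈ Set.Icc 1 (p / (p - 1)))
    (hHc : -(p - 1) * c ^ p + p * c ^ (p - 1) = f ^ p / F) :
    (∀ β : ℝ, 0 < β →
      (1 + 1 / (c - 1)) * (((c - 1) + 1) ^ (p - 1) * F - f ^ p) / (p - 1) ≤
        (1 + 1 / β) * ((β + 1) ^ (p - 1) * F - f ^ p) / (p - 1)) ∧
    (1 + 1 / (c - 1)) * (((c - 1) + 1) ^ (p - 1) * F - f ^ p) / (p - 1) = F * c ^ p := by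
  have hfp : 0 < f ^ p := Real.rpow_pos_of_pos hf p
  have hF : 0 < F := hfp.trans hfF
  have hc1 : 1 ≤ c := hc.1
  have hcpos : 0 < c := lt_of_lt_of_le one_pos hc1
  have hp1 : (0:ℝ) < p - 1 := by linarith
  have hc1' : 1 < c := by
    rcases lt_or_eq_of_le hc1 with h | h
    · exact h
    · exfalso
      rw [← h] at hHc
      simp [Real.one_rpow] at hHc
      have : f ^ p / F < 1 := (div_lt_one hF).mpr hfF
      linarith
  have ha : f ^ p = F * (p * c ^ (p - 1) - (p - 1) * c ^ p) := by
    have := hHc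
    field_simp at this
    linarith
  have hcp : c ^ p = c ^ (p - 1) * c := by
    have := Real.rpow_add_one (ne_of_gt hcpos) (p - 1)
    rw [show p - 1 + 1 = p by ring] at this
    exact this
  have key : (1 + 1 / (c - 1)) * (((c - 1) + 1) ^ (p - 1) * F - f ^ p) / (p - 1)
      = F * c ^ p := by
    have hc0 : c - 1 ≠ 0 := by linarith
    rw [show (c - 1) + 1 = c by ring, ha, hcp]
    field_simp
    ring
  refine ⟨fun β hβ => ?_, key⟩
  rw [key]
  set X := c ^ (p - 1) with hX
  have hXpos : 0 < X := Real.rpow_pos_of_pos hcpos _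
  set t := β + 1 with ht
  have htpos : (0:ℝ) < t := by rw [ht]; linarith
  have hber : 1 + p * (t / c - 1) ≤ (1 + (t / c - 1)) ^ p := by
    apply one_add_mul_self_le_rpow_one_add _ hp.le
    have : 0 < t / c := div_pos htpos hcpos
    linarith
  have h1 : (1 + (t / c - 1)) ^ p = t ^ p / c ^ p := by
    rw [show 1 + (t / c - 1) = t / c by ring]
    exact Real.div_rpow htpos.le hcpos.le p
  rw [h1] at hber
  have hcpne : (0:ℝ) < c ^ p := Real.rpow_pos_of_pos hcpos _
  have hber2 : c ^ p * (1 + p * (t / c - 1)) ≤ t ^ p :=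
    (le_div_iff₀' hcpne).mp hber
  have hber3 : X * c + p * X * t - p * X * c ≤ t ^ p := by
    have heq : X * c + p * X * t - p * X * c = c ^ p * (1 + p * (t / c - 1)) := by
      rw [hcp]
      field_simp
      ring
    rw [heq]; exact hber2
  have htp : t ^ p = t ^ (p - 1) * t := by
    have := Real.rpow_add_one (ne_of_gt htpos) (p - 1)
    rw [show p - 1 + 1 = p by ring] at this
    exact this
  have hberF := mul_le_mul_of_nonneg_left hber3 hF.le
  rw [htp] at hberF
  rw [le_div_iff₀ hp1, ha, hcp]
  have h2 : (1 + 1 / β) * (t ^ (p - 1) * F - F * (p * X - (p - 1) * (X * c)))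
      = (t * (t ^ (p - 1) * F - F * (p * X - (p - 1) * (X * c)))) / β := by
    rw [ht]
    field_simp
  rw [h2, le_div_iff₀ hβ]
  simp only [ht] at hberF ⊢
  nlinarith [hberF]
end

section
/- Let p > 1, f, F > 0 with f^p ≤ F, and let G ≥ 0 satisfy F ≥ f^p/(β+1)^{p-1} + (p-1)β G/(β+1)^p for all β > 0. Then G ≤ F·ω_p(f^p/F)^p, where ω_p is the inverse of H_p(z) = -(p-1)z^p + pz^{p-1} on [1, p/(p-1)]. -/
/-!
Substituting `t = β + 1` and `f^p = F·H_p(c)`, the hypothesis reads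
`F·H_p(c)·t + (p-1)(t-1)G ≤ F·t^p` for all `t > 1`, and `H_p(c)·c = c^p (p - (p-1)c)`.
If `c > 1`, taking `t = c` leaves `(p-1)(c-1)G ≤ (p-1)(c-1)F c^p`. If `c = 1`, both sides
agree at `t = 1`, so comparing their derivatives at `t = 1` gives `(p-1)G + F ≤ pF`.
-/

open Filter Topology

lemma le_mul_of_forall_mul_le_one_add_rpow_sub_one {p K F : ℝ}
    (h : ∀ β : ℝ, 0 < β → β * K ≤ F * ((1 + β) ^ p - 1)) : K ≤ F * p := by
  have hderiv : HasDerivAt (fun x : ℝ => x ^ p) p 1 := by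
    simpa using Real.hasDerivAt_rpow_const (x := 1) (p := p) (Or.inl one_ne_zero)
  have hslope : Tendsto (fun β : ℝ => F * (β⁻¹ * ((1 + β) ^ p - 1))) (𝓝[>] 0) (𝓝 (F * p)) := by
    simpa using hderiv.tendsto_slope_zero_right.const_mul F
  refine ge_of_tendsto hslope ?_
  filter_upwards [self_mem_nhdsWithin] with β (hβ : 0 < β)
  rw [mul_left_comm, inv_mul_eq_div, le_div_iff₀ hβ, mul_comm K]
  exact h β hβ

lemma neg_mul_rpow_add_mul_rpow_sub_one_mul_self {p c : ℝ} (hc : 0 < c) :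
    (-(p - 1) * c ^ p + p * c ^ (p - 1)) * c = c ^ p * (p - (p - 1) * c) := by
  rw [Real.rpow_sub_one hc.ne']
  field_simp
  ring

lemma mul_add_le_mul_rpow_of_div_add_div_le {p a G F t : ℝ} (ht : 0 < t)
    (h : a / t ^ (p - 1) + (p - 1) * (t - 1) * G / t ^ p ≤ F) :
    a * t + (p - 1) * (t - 1) * G ≤ F * t ^ p := by
  have htp : 0 < t ^ p := Real.rpow_pos_of_pos ht p
  rw [Real.rpow_sub_one ht.ne', div_div_eq_mul_div, ← add_div, div_le_iff₀ htp] at h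
  exact h

theorem bound_by_Bellman_general (p f F G c : ℝ) (hp : 1 < p) (hf : 0 < f)
    (hfF : f ^ p ≤ F) (hc : c ∈ Set.Icc 1 (p / (p - 1)))
    (hHc : -(p - 1) * c ^ p + p * c ^ (p - 1) = f ^ p / F)
    (h : ∀ β : ℝ, 0 < β →
      f ^ p / (β + 1) ^ (p - 1) + (p - 1) * β * G / (β + 1) ^ p ≤ F) :
    G ≤ F * c ^ p := by
  have hF : 0 < F := (Real.rpow_pos_of_pos hf p).trans_le hfF
  have hfp : f ^ p = F * (-(p - 1) * c ^ p + p * c ^ (p - 1)) := by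
    rw [hHc]; field_simp
  have hbellman : ∀ t : ℝ, 1 < t →
      F * (-(p - 1) * c ^ p + p * c ^ (p - 1)) * t + (p - 1) * (t - 1) * G ≤ F * t ^ p := by
    intro t ht
    have := h (t - 1) (by linarith)
    rw [sub_add_cancel, hfp] at this
    exact mul_add_le_mul_rpow_of_div_add_div_le (by linarith) this
  rcases hc.1.eq_or_lt with rfl | hc1
  · have hK : (p - 1) * G + F ≤ F * p := by
      refine le_mul_of_forall_mul_le_one_add_rpow_sub_one fun β hβ => ?_
      have := hbellman (1 + β) (by linarith)
      simp only [Real.one_rpow] at this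
      linarith
    rw [Real.one_rpow]
    nlinarith
  · have := hbellman c hc1
    rw [mul_assoc, neg_mul_rpow_add_mul_rpow_sub_one_mul_self (by linarith)] at this
    have hcp : 0 < c ^ p := Real.rpow_pos_of_pos (by linarith) p
    have hfac : 0 < (p - 1) * (c - 1) := mul_pos (by linarith) (by linarith)
    nlinarith

/-- Let `p > 1`, `0 < f^p ≤ F`, `G ≥ 0`, and suppose
`F ≥ f^p/(β+1)^(p-1) + (p-1)βG/(β+1)^p` for all `β > 0`. Then `G ≤ F·c^p`, where
`c = ω_p(f^p/F)` is characterized by `c ∈ [1, p/(p-1)]` and `H_p c = f^p/F`. -/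
theorem bound_by_Bellman (p f F G c : ℝ) (hp : 1 < p) (hf : 0 < f)
    (hfF : f ^ p ≤ F) (hG : 0 ≤ G) (hc : c ∈ Set.Icc 1 (p / (p - 1)))
    (hHc : -(p - 1) * c ^ p + p * c ^ (p - 1) = f ^ p / F)
    (h : ∀ β : ℝ, 0 < β →
      f ^ p / (β + 1) ^ (p - 1) + (p - 1) * β * G / (β + 1) ^ p ≤ F) :
    G ≤ F * c ^ p :=
  bound_by_Bellman_general p f F G c hp hf hfF hc hHc h
end

section
/- Let (X, μ) be a nonatomic probability measure space and 𝒯 a tree on X (i.e., X ∈ 𝒯, each I ∈ 𝒯 has μ(I) > 0 and has a countable family C(I) of at least two pairwise disjoint elements of 𝒯 whose union is I, 𝒯 is the union of the generations 𝒯_(m), and sup_{I ∈ 𝒯_(m)} μ(I) → 0). Then for every I ∈ 𝒯 and every a ∈ (0,1) there exists a subfamily ℱ(I) ⊆ 𝒯 of pairwise disjoint subsets of I such that μ(⋃_{J ∈ ℱ(I)} J) = Σ_{J ∈ ℱ(I)} μ(J) = (1−a)μ(I). -/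
open MeasureTheory Set Filter
open scoped ENNReal

/-- A tree `𝒯` on a probability space `(X, μ)` in the sense of Melas:
`X ∈ 𝒯`; every `I ∈ 𝒯` is measurable with `μ(I) > 0`; each `I ∈ 𝒯` has a finite or
countable family `C(I) ⊆ 𝒯` of at least two pairwise disjoint elements with union `I`;
`𝒯` is the union of its generations `𝒯_(m)`; and `sup_{I ∈ 𝒯_(m)} μ(I) → 0`. -/
structure DyadicTree {X : Type*} [MeasurableSpace X] (μ : Measure X) where
  mem : Set (Set X)
  univ_mem : Set.univ ∈ mem
  meas : ∀ I ∈ mem, MeasurableSet I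
  measure_pos : ∀ I ∈ mem, 0 < μ I
  C : Set X → Set (Set X)
  C_subset_mem : ∀ I ∈ mem, C I ⊆ mem
  C_countable : ∀ I ∈ mem, (C I).Countable
  C_nontrivial : ∀ I ∈ mem, ∃ J ∈ C I, ∃ K ∈ C I, J ≠ K
  C_disjoint : ∀ I ∈ mem, (C I).Pairwise Disjoint
  C_union : ∀ I ∈ mem, ⋃₀ C I = I
  gen : ℕ → Set (Set X)
  gen_zero : gen 0 = {Set.univ}
  gen_succ : ∀ m, gen (m + 1) = ⋃ I ∈ gen m, C I
  mem_eq : mem = ⋃ m, gen m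
  sup_measure_tendsto : Tendsto (fun m => ⨆ I ∈ gen m, μ I) atTop (nhds 0)

variable {X : Type*} [MeasurableSpace X]

/-- The average `Av_I(φ) = (1/μ(I)) ∫_I φ dμ`. -/
noncomputable def Av (μ : Measure X) (I : Set X) (φ : X → ℝ≥0∞) : ℝ≥0∞ :=
  (∫⁻ y in I, φ y ∂μ) / μ I

/-- The dyadic-like maximal operator
`M_𝒯 φ(x) = sup { (1/μ(I)) ∫_I φ dμ : x ∈ I ∈ 𝒯 }`. -/
noncomputable def maxOp {μ : Measure X} (T : DyadicTree μ) (φ : X → ℝ≥0∞) (x : X) : ℝ≥0∞ :=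
  ⨆ I ∈ T.mem, ⨆ _ : x ∈ I, Av μ I φ

/-!
Descend greedily through the tree, keeping a remaining target `ρ < μ(J)` at the current node
`J` (initially `ρ = r < μ(I)`, `J = I`). Enumerate the children of `J` and put them into the
family until the next child `K` would make the total exceed `ρ`; then continue inside `K`
with what is left of `ρ`. A child chosen at `J` lies outside `K`, which contains all later
choices, so the family is disjoint. The remaining target is below the measure of the current
node, which tends to `0` along any descending chain of the tree, so the measures of the chosen
children add up to exactly `r`.
-/

open Function Topology

theorem ENNReal.tsum_eq_of_add_succ_eq {d r : ℕ → ℝ≥0∞} (h : ∀ k, d k + r (k + 1) = r k)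
    (hr : Tendsto r atTop (𝓝 0)) : ∑' k, d k = r 0 := by
  have partial_sum : ∀ n, ∑ k ∈ Finset.range n, d k + r n = r 0 := by
    intro n
    induction n with
    | zero => simp
    | succ n ih => rw [Finset.sum_range_succ, add_assoc, h n, ih]
  have hlim := (ENNReal.tendsto_nat_tsum d).add hr
  simp only [partial_sum, add_zero] at hlim
  exact tendsto_nhds_unique hlim tendsto_const_nhds

section

variable {α : Type*}

theorem pairwise_disjoint_of_subset_of_disjoint_succ {s J : ℕ → Set α} (hJ : Antitone J)
    (hs : ∀ k, s k ⊆ J k) (hdisj : ∀ k, Disjoint (s k) (J (k + 1))) :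
    Pairwise (Disjoint on s) := by
  have hlt : ∀ k l, k < l → Disjoint (s k) (s l) := fun k l hkl =>
    (hdisj k).mono_right ((hs l).trans (hJ hkl))
  intro k l hkl
  rcases hkl.lt_or_gt with h | h
  exacts [hlt k l h, (hlt l k h).symm]

theorem pairwiseDisjoint_iUnion_of_pairwise_disjoint_sUnion {t : ℕ → Set (Set α)}
    (ht : ∀ k, (t k).Pairwise Disjoint) (hdisj : Pairwise (Disjoint on fun k => ⋃₀ t k)) :
    (⋃ k, t k).Pairwise Disjoint := by
  simp only [Set.Pairwise, Set.mem_iUnion]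
  rintro A ⟨k, hA⟩ B ⟨l, hB⟩ hAB
  rcases eq_or_ne k l with rfl | hkl
  · exact ht k hA hB hAB
  · exact (hdisj hkl).mono (subset_sUnion_of_mem hA) (subset_sUnion_of_mem hB)

end

theorem MeasureTheory.exists_subset_measure_sUnion_le_lt_add {μ : Measure X}
    {s : Set (Set X)} (hs : s.Countable) {r : ℝ≥0∞} (hr : r < μ (⋃₀ s)) :
    ∃ t ⊆ s, ∃ K ∈ s, K ∉ t ∧ μ (⋃₀ t) ≤ r ∧ r < μ (⋃₀ t) + μ K := by
  have hne : s.Nonempty := nonempty_iff_ne_empty.2 fun h => by simp [h] at hr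
  obtain ⟨f, rfl⟩ := hs.exists_eq_range hne
  set U : ℕ → Set X := fun n => ⋃ i < n, f i
  have hU : Monotone U := fun _ _ hmn =>
    biUnion_mono (fun _ hi => lt_of_lt_of_le hi hmn) fun _ _ => le_rfl
  have hex : ∃ n, r < μ (U n) := by
    rwa [← lt_iSup_iff, ← hU.measure_iUnion, biUnion_lt_eq_iUnion, ← sUnion_range]
  have hN : Nat.find hex ≠ 0 := fun h => by simpa [h, U] using Nat.find_spec hex
  obtain ⟨n, hn⟩ := Nat.exists_eq_add_one_of_ne_zero hN
  have hle : μ (U n) ≤ r := not_lt.1 (Nat.find_min hex (by omega))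
  have hlt : r < μ (U n ∪ f n) := by
    rw [← biUnion_lt_succ, ← hn]
    exact Nat.find_spec hex
  have hUt : ⋃₀ (f '' Iio n) = U n := by simp [sUnion_image, U]
  refine ⟨f '' Iio n, image_subset_range _ _, f n, mem_range_self n, ?_, hUt ▸ hle,
    hUt ▸ hlt.trans_le (measure_union_le _ _)⟩
  rintro ⟨i, hi, hfi⟩
  have : U n ∪ f n = U n := union_eq_left.2 (hfi ▸ subset_biUnion_of_mem (u := f) hi)
  exact (hle.trans_lt (this ▸ hlt)).false

namespace DyadicTree

variable {μ : Measure X} (T : DyadicTree μ)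

theorem subset_of_mem_C {I J : Set X} (hI : I ∈ T.mem) (hJ : J ∈ T.C I) : J ⊆ I :=
  T.C_union I hI ▸ subset_sUnion_of_mem hJ

theorem exists_mem_gen {I : Set X} (hI : I ∈ T.mem) : ∃ m, I ∈ T.gen m :=
  mem_iUnion.1 (T.mem_eq ▸ hI)

theorem tendsto_measure_of_mem_C_succ {J : ℕ → Set X} (hJ₀ : J 0 ∈ T.mem)
    (hJ : ∀ k, J (k + 1) ∈ T.C (J k)) : Tendsto (fun k => μ (J k)) atTop (𝓝 0) := by
  obtain ⟨m, hm⟩ := T.exists_mem_gen hJ₀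
  have hgen : ∀ k, J k ∈ T.gen (m + k) := by
    intro k
    induction k with
    | zero => exact hm
    | succ k ih => exact T.gen_succ (m + k) ▸ mem_iUnion₂.2 ⟨J k, ih, hJ k⟩
  have hsup : Tendsto (fun k => ⨆ I ∈ T.gen (m + k), μ I) atTop (𝓝 0) :=
    T.sup_measure_tendsto.comp (tendsto_atTop_mono (Nat.le_add_left · m) tendsto_id)
  exact tendsto_of_tendsto_of_tendsto_of_le_of_le tendsto_const_nhds hsup
    (fun _ => zero_le) fun k => le_biSup _ (hgen k)

theorem exists_child_split {J : Set X} (hJ : J ∈ T.mem) {r : ℝ≥0∞} (hr : r < μ J) :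
    ∃ t ⊆ T.C J, ∃ K ∈ T.C J, K ∉ t ∧ μ (⋃₀ t) ≤ r ∧ r - μ (⋃₀ t) < μ K := by
  rw [← T.C_union J hJ] at hr
  obtain ⟨t, ht, K, hK, hKt, hle, hlt⟩ :=
    exists_subset_measure_sUnion_le_lt_add (T.C_countable J hJ) hr
  refine ⟨t, ht, K, hK, hKt, hle, ?_⟩
  exact (ENNReal.sub_lt_iff_lt_left (ne_top_of_le_ne_top hr.ne_top hle) hle).2 hlt

theorem exists_greedy_descent {I : Set X} (hI : I ∈ T.mem) {r : ℝ≥0∞} (hr : r < μ I) :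
    ∃ (J : ℕ → Set X) (ρ : ℕ → ℝ≥0∞) (t : ℕ → Set (Set X)), J 0 = I ∧ ρ 0 = r ∧
      ∀ k, J k ∈ T.mem ∧ ρ k < μ (J k) ∧ t k ⊆ T.C (J k) ∧ J (k + 1) ∈ T.C (J k) ∧
        J (k + 1) ∉ t k ∧ μ (⋃₀ t k) + ρ (k + 1) = ρ k := by
  choose! t ht K hK hKt hle hlt using fun (J : Set X) (r : ℝ≥0∞) (hJ : J ∈ T.mem)
    (hr : r < μ J) => T.exists_child_split hJ hr
  set next : Set X × ℝ≥0∞ → Set X × ℝ≥0∞ := fun p => (K p.1 p.2, p.2 - μ (⋃₀ t p.1 p.2))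
  set p : ℕ → Set X × ℝ≥0∞ := fun n => next^[n] (I, r)
  have hp : ∀ n, p (n + 1) = next (p n) := fun n => iterate_succ_apply' next n (I, r)
  have hgood : ∀ n, (p n).1 ∈ T.mem ∧ (p n).2 < μ (p n).1 := by
    intro n
    induction n with
    | zero => exact ⟨hI, hr⟩
    | succ n ih =>
      rw [hp]
      exact ⟨T.C_subset_mem _ ih.1 (hK _ _ ih.1 ih.2), hlt _ _ ih.1 ih.2⟩
  refine ⟨fun n => (p n).1, fun n => (p n).2, fun n => t (p n).1 (p n).2, rfl, rfl,
    fun k => ?_⟩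
  obtain ⟨hmem, hlt⟩ := hgood k
  simp only [hp]
  exact ⟨hmem, hlt, ht _ _ hmem hlt, hK _ _ hmem hlt, hKt _ _ hmem hlt,
    add_tsub_cancel_of_le (hle _ _ hmem hlt)⟩

theorem exists_subfamily_measure_eq_of_lt {I : Set X} (hI : I ∈ T.mem) {r : ℝ≥0∞}
    (hr : r < μ I) :
    ∃ F : Set (Set X), F ⊆ T.mem ∧ F.Pairwise Disjoint ∧ (∀ J ∈ F, J ⊆ I) ∧
      μ (⋃₀ F) = ∑' J : F, μ (J : Set X) ∧ μ (⋃₀ F) = r := by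
  obtain ⟨J, ρ, t, rfl, rfl, hdesc⟩ := T.exists_greedy_descent hI hr
  choose hJ hρ ht hJC hJt hρ_succ using hdesc
  have hJ_anti : Antitone J :=
    antitone_nat_of_succ_le fun k => T.subset_of_mem_C (hJ k) (hJC k)
  have htJ : ∀ k, ∀ A ∈ t k, A ⊆ J k := fun k A hA => T.subset_of_mem_C (hJ k) (ht k hA)
  have ht_mem : ∀ k, t k ⊆ T.mem := fun k => (ht k).trans (T.C_subset_mem _ (hJ k))
  have ht_count : ∀ k, (t k).Countable := fun k => (T.C_countable _ (hJ k)).mono (ht k)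
  have ht_meas : ∀ k, ∀ A ∈ t k, MeasurableSet A := fun k A hA => T.meas A (ht_mem k hA)
  have ht_disj : ∀ k, (t k).Pairwise Disjoint := fun k => (T.C_disjoint _ (hJ k)).mono (ht k)
  have hdisj : Pairwise (Disjoint on fun k => ⋃₀ t k) :=
    pairwise_disjoint_of_subset_of_disjoint_succ hJ_anti (fun k => sUnion_subset (htJ k))
      fun k => disjoint_sUnion_left.2 fun A hA =>
        T.C_disjoint _ (hJ k) (ht k hA) (hJC k) fun h => hJt k (h ▸ hA)
  have hF := pairwiseDisjoint_iUnion_of_pairwise_disjoint_sUnion ht_disj hdisj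
  have hρ_lim : Tendsto ρ atTop (𝓝 0) :=
    tendsto_of_tendsto_of_tendsto_of_le_of_le tendsto_const_nhds
      (T.tendsto_measure_of_mem_C_succ (hJ 0) hJC) (fun _ => zero_le) fun k => (hρ k).le
  refine ⟨⋃ k, t k, iUnion_subset ht_mem, hF, ?_, measure_sUnion (countable_iUnion ht_count) hF
    fun A hA => T.meas A (iUnion_subset ht_mem hA), ?_⟩
  · simp only [mem_iUnion]
    rintro A ⟨k, hA⟩
    exact (htJ k A hA).trans (hJ_anti (Nat.zero_le k))
  · rw [sUnion_iUnion, measure_iUnion hdisj fun k => .sUnion (ht_count k) (ht_meas k)]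
    exact ENNReal.tsum_eq_of_add_succ_eq hρ_succ hρ_lim

theorem exists_subfamily_measure_eq {I : Set X} (hI : I ∈ T.mem) {r : ℝ≥0∞} (hr : r ≤ μ I) :
    ∃ F : Set (Set X), F ⊆ T.mem ∧ F.Pairwise Disjoint ∧ (∀ J ∈ F, J ⊆ I) ∧
      μ (⋃₀ F) = ∑' J : F, μ (J : Set X) ∧ μ (⋃₀ F) = r := by
  rcases hr.lt_or_eq with hlt | rfl
  · exact T.exists_subfamily_measure_eq_of_lt hI hlt
  · refine ⟨{I}, singleton_subset_iff.2 hI, pairwise_singleton _ _,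
      fun J hJ => (eq_of_mem_singleton hJ).le, ?_, ?_⟩ <;> simp

end DyadicTree

theorem tree_exists_subfamily_general (μ : Measure X)
    (T : DyadicTree μ) (I : Set X) (hI : I ∈ T.mem) (a : ℝ) (ha : a ∈ Set.Ioo (0 : ℝ) 1) :
    ∃ F : Set (Set X), F ⊆ T.mem ∧ F.Pairwise Disjoint ∧ (∀ J ∈ F, J ⊆ I) ∧
      μ (⋃₀ F) = ∑' J : F, μ (J : Set X) ∧
      μ (⋃₀ F) = ENNReal.ofReal (1 - a) * μ I := by
  have hfrac : ENNReal.ofReal (1 - a) ≤ 1 := ENNReal.ofReal_le_one.2 (by linarith [ha.1])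
  exact T.exists_subfamily_measure_eq hI (mul_le_of_le_one_left zero_le hfrac)

/-- Lemma 2.1: on a nonatomic probability space, for every `I ∈ 𝒯` and `a ∈ (0,1)`
there is a subfamily `ℱ(I) ⊆ 𝒯` of pairwise disjoint subsets of `I` with
`μ(⋃ ℱ(I)) = Σ_{J ∈ ℱ(I)} μ(J) = (1 − a) μ(I)`. -/
theorem tree_exists_subfamily (μ : Measure X) [IsProbabilityMeasure μ] [NullSingletonClass μ]
    (T : DyadicTree μ) (I : Set X) (hI : I ∈ T.mem) (a : ℝ) (ha : a ∈ Set.Ioo (0 : ℝ) 1) :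
    ∃ F : Set (Set X), F ⊆ T.mem ∧ F.Pairwise Disjoint ∧ (∀ J ∈ F, J ⊆ I) ∧
      μ (⋃₀ F) = ∑' J : F, μ (J : Set X) ∧
      μ (⋃₀ F) = ENNReal.ofReal (1 - a) * μ I :=
  tree_exists_subfamily_general μ T I hI a ha
end

section
/- Let φ be 𝒯-good and I, J ∈ S_φ. Then either A(φ, J) ∩ I = ∅ or J ⊆ I. -/
open MeasureTheory Set Filter
open scoped ENNReal

variable {X : Type*} [MeasurableSpace X]

variable {μ : Measure X}

/-- The exceptional set `𝒜_φ = {x : M_𝒯φ(x) > Av_I(φ) for all I ∈ 𝒯 with x ∈ I}`. -/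
def badSet (T : DyadicTree μ) (φ : X → ℝ≥0∞) : Set X :=
  {x | ∀ I ∈ T.mem, x ∈ I → Av μ I φ < maxOp T φ x}

/-- `φ` is `𝒯`-good if the set `𝒜_φ` has `μ`-measure zero. -/
def TGood (T : DyadicTree μ) (φ : X → ℝ≥0∞) : Prop :=
  μ (badSet T φ) = 0

/-- The set `A(φ, I) = {x ∈ X ∖ 𝒜_φ : I_φ(x) = I}`, where `I_φ(x)` is the largest
`I ∈ 𝒯` with `x ∈ I` and `M_𝒯φ(x) = Av_I(φ)`. -/
def ASet (T : DyadicTree μ) (φ : X → ℝ≥0∞) (I : Set X) : Set X :=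
  {x | x ∉ badSet T φ ∧ x ∈ I ∧ maxOp T φ x = Av μ I φ ∧
    ∀ J ∈ T.mem, x ∈ J → maxOp T φ x = Av μ J φ → J ⊆ I}

/-- The subtree `S_φ = {I ∈ 𝒯 : μ(A(φ,I)) > 0} ∪ {X}`. -/
def Sphi (T : DyadicTree μ) (φ : X → ℝ≥0∞) : Set (Set X) :=
  {I ∈ T.mem | 0 < μ (ASet T φ I)} ∪ {Set.univ}

/-!
If `x ∈ A(φ, J) ∩ I` with `I ⊆ J`, then `Av_I(φ) ≤ M_𝒯φ(x) = Av_J(φ)`. Any point `y` of the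
non-null set `A(φ, I)` then has `M_𝒯φ(y) = Av_I(φ) ≤ Av_J(φ) ≤ M_𝒯φ(y)`, so `J` attains the
maximal function at `y`, contradicting the maximality of `I = I_φ(y)`. Since two elements of a
tree are nested or disjoint, this is the only way `J ⊆ I` can fail.
-/

namespace DyadicTree

variable (T : DyadicTree μ)

lemma mem_of_mem_gen {m : ℕ} {I : Set X} (hI : I ∈ T.gen m) : I ∈ T.mem :=
  T.mem_eq ▸ mem_iUnion.2 ⟨m, hI⟩

lemma exists_parent {m : ℕ} {I : Set X} (hI : I ∈ T.gen (m + 1)) :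
    ∃ I' ∈ T.gen m, I ∈ T.C I' ∧ I ⊆ I' := by
  rw [T.gen_succ] at hI
  obtain ⟨I', hI', hIC⟩ := mem_iUnion₂.1 hI
  exact ⟨I', hI', hIC, T.C_union I' (T.mem_of_mem_gen hI') ▸ subset_sUnion_of_mem hIC⟩

lemma exists_superset_mem_gen (m : ℕ) :
    ∀ k, ∀ J ∈ T.gen (m + k), ∃ J' ∈ T.gen m, J ⊆ J'
  | 0, J, hJ => ⟨J, hJ, subset_rfl⟩
  | k + 1, J, hJ => by
    obtain ⟨J₁, hJ₁, -, hJJ₁⟩ := T.exists_parent hJ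
    obtain ⟨J', hJ', hJ₁J'⟩ := exists_superset_mem_gen m k J₁ hJ₁
    exact ⟨J', hJ', hJJ₁.trans hJ₁J'⟩

lemma eq_of_mem_gen_of_nonempty_inter :
    ∀ {m : ℕ} {I J : Set X}, I ∈ T.gen m → J ∈ T.gen m → (I ∩ J).Nonempty → I = J
  | 0, I, J, hI, hJ, _ => by
    rw [T.gen_zero] at hI hJ
    rw [mem_singleton_iff.1 hI, mem_singleton_iff.1 hJ]
  | m + 1, I, J, hI, hJ, ⟨x, hxI, hxJ⟩ => by
    obtain ⟨I', hI', hIC, hII'⟩ := T.exists_parent hI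
    obtain ⟨J', hJ', hJC, hJJ'⟩ := T.exists_parent hJ
    obtain rfl : I' = J' :=
      eq_of_mem_gen_of_nonempty_inter hI' hJ' ⟨x, hII' hxI, hJJ' hxJ⟩
    by_contra hIJ
    exact disjoint_left.1 (T.C_disjoint I' (T.mem_of_mem_gen hI') hIC hJC hIJ) hxI hxJ

lemma subset_of_mem_gen_of_le {m n : ℕ} {I J : Set X} (hI : I ∈ T.gen m) (hJ : J ∈ T.gen n)
    (hmn : m ≤ n) (h : (I ∩ J).Nonempty) : J ⊆ I := by
  obtain ⟨k, rfl⟩ := Nat.exists_eq_add_of_le hmn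
  obtain ⟨J', hJ', hJJ'⟩ := T.exists_superset_mem_gen m k J hJ
  obtain rfl : I = J' :=
    T.eq_of_mem_gen_of_nonempty_inter hI hJ' (h.mono (inter_subset_inter_right I hJJ'))
  exact hJJ'

lemma subset_or_subset_of_nonempty_inter {I J : Set X} (hI : I ∈ T.mem) (hJ : J ∈ T.mem)
    (h : (I ∩ J).Nonempty) : I ⊆ J ∨ J ⊆ I := by
  rw [T.mem_eq] at hI hJ
  obtain ⟨m, hI⟩ := mem_iUnion.1 hI
  obtain ⟨n, hJ⟩ := mem_iUnion.1 hJ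
  rcases le_total m n with hmn | hnm
  · exact .inr (T.subset_of_mem_gen_of_le hI hJ hmn h)
  · exact .inl (T.subset_of_mem_gen_of_le hJ hI hnm (inter_comm I J ▸ h))

end DyadicTree

lemma Av_le_maxOp (T : DyadicTree μ) (φ : X → ℝ≥0∞) {x : X} {I : Set X} (hI : I ∈ T.mem)
    (hx : x ∈ I) : Av μ I φ ≤ maxOp T φ x :=
  le_iSup₂_of_le I hI (le_iSup_of_le hx le_rfl)

lemma mem_of_mem_Sphi {T : DyadicTree μ} {φ : X → ℝ≥0∞} {I : Set X}
    (hI : I ∈ Sphi T φ) : I ∈ T.mem := by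
  rcases hI with ⟨hI, -⟩ | rfl
  exacts [hI, T.univ_mem]

lemma subset_of_mem_ASet_of_Av_le {T : DyadicTree μ} {φ : X → ℝ≥0∞} {I J : Set X} {y : X}
    (hy : y ∈ ASet T φ I) (hJ : J ∈ T.mem) (hyJ : y ∈ J) (hAv : Av μ I φ ≤ Av μ J φ) :
    J ⊆ I := by
  obtain ⟨-, -, hyI, hmax⟩ := hy
  exact hmax J hJ hyJ (le_antisymm (hyI.trans_le hAv) (Av_le_maxOp T φ hJ hyJ))

theorem ASet_inter_empty_or_subset_general (μ : Measure X)
    (T : DyadicTree μ) (φ : X → ℝ≥0∞)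
    (I J : Set X) (hI : I ∈ Sphi T φ) (hJ : J ∈ Sphi T φ) :
    ASet T φ J ∩ I = ∅ ∨ J ⊆ I := by
  rcases hI with ⟨hImem, hIpos⟩ | rfl
  · refine or_iff_not_imp_left.2 fun hne => ?_
    obtain ⟨x, ⟨-, hxJ, hxmax, -⟩, hxI⟩ := nonempty_iff_ne_empty.2 hne
    have hJmem := mem_of_mem_Sphi hJ
    rcases T.subset_or_subset_of_nonempty_inter hImem hJmem ⟨x, hxI, hxJ⟩ with hIJ | hJI
    · obtain ⟨y, hy⟩ := nonempty_of_measure_ne_zero hIpos.ne'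
      exact subset_of_mem_ASet_of_Av_le hy hJmem (hIJ hy.2.1)
        (hxmax ▸ Av_le_maxOp T φ hImem hxI)
    · exact hJI
  · exact .inr (subset_univ J)

/-- Lemma 3.2 i): for `φ` `𝒯`-good and `I, J ∈ S_φ`, either `A(φ,J) ∩ I = ∅` or
`J ⊆ I`. -/
theorem ASet_inter_empty_or_subset (μ : Measure X) [IsProbabilityMeasure μ] [NullSingletonClass μ]
    (T : DyadicTree μ) (φ : X → ℝ≥0∞) (hφ : Measurable φ)
    (hint : ∫⁻ y, φ y ∂μ ≠ ∞) (hgood : TGood T φ)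
    (I J : Set X) (hI : I ∈ Sphi T φ) (hJ : J ∈ Sphi T φ) :
    ASet T φ J ∩ I = ∅ ∨ J ⊆ I :=
  ASet_inter_empty_or_subset_general μ T φ I J hI hJ
end
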